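/- With the labeling q_1,…,q_r, a_1,…,a_k of the arcs of the fixed proper circular arc representation of the minimum counterexample 𝒢: (1) if arc a_j is clockwise adjacent to arc q_i, then all of q_{i+1},…,q_r,a_1,…,a_j (at least r−i+j arcs) are clockwise adjacent to q_i; (2) if arc a_j is clockwise adjacent to arc a_i, then j > i and all of a_{i+1},…,a_j are clockwise adjacent to a_i; (3) if arc a_j is anticlockwise adjacent to arc a_i, then j < i and all of a_j,…,a_{i−1} are anticlockwise adjacent to a_i; (4) if arc a_j is anticlockwise adjacent to arc q_i, then all of a_j,…,a_k,q_1,…,q_{i−1} (at least k−j+i arcs) are anticlockwise adjacent to q_i. -/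

import Mathlib

/-!
Measure every point by its clockwise angle `θ ∈ [0, 1)` from `p₀`. An arc avoiding `p₀` (an `a`-arc)
is the interval `[θ l, θ r]`, and in a proper family two such intervals have their left endpoints in
the same order as their right endpoints. An arc through `p₀` (a `q`-arc) covers `[0, θ r]`, and
also `[θ l, 1)` when `θ r < θ l`. In each of the four cases, an arc of the claimed range that missed
the endpoint in question would be properly contained in another arc of the family.
-/

open SimpleGraph
open scoped Classical

instance : Fact ((0:ℝ) < 1) := ⟨one_pos⟩

/-- An arc on the unit circle `AddCircle 1`, described by its left endpoint (the first
endpoint met anticlockwise from an interior point) and its (clockwise) length.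
Since `0 < len < 1`, an arc is neither a single point nor the whole circle. -/
structure CArc where
  left : AddCircle (1:ℝ)
  len : ℝ
  len_pos : 0 < len
  len_lt_one : len < 1

namespace CArc

/-- The set of points of the arc: going clockwise from the left endpoint for `len`. -/
def pts (a : CArc) : Set (AddCircle (1:ℝ)) :=
  {q | ∃ t : ℝ, 0 ≤ t ∧ t ≤ a.len ∧ q = a.left + (t : AddCircle (1:ℝ))}

/-- The right endpoint of an arc. -/
noncomputable def right (a : CArc) : AddCircle (1:ℝ) := a.left + ((a.len : ℝ) : AddCircle (1:ℝ))

end CArc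

/-- A family of arcs on the circle: a finite set of arcs with all endpoints distinct. -/
structure ArcFamily where
  arcs : Finset CArc
  endpoints_distinct :
    ∀ a ∈ arcs, ∀ b ∈ arcs, a ≠ b →
      a.left ≠ b.left ∧ a.left ≠ b.right ∧ a.right ≠ b.left ∧ a.right ≠ b.right

namespace ArcFamily

/-- A family of arcs is proper if no arc is properly contained in another. -/
def IsProper (F : ArcFamily) : Prop :=
  ∀ a ∈ F.arcs, ∀ b ∈ F.arcs, ¬ a.pts ⊂ b.pts

/-- The overlap set of a point `p`: all arcs of the family containing `p`. -/
noncomputable def overlap (F : ArcFamily) (p : AddCircle (1:ℝ)) : Finset CArc :=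
  F.arcs.filter fun a => p ∈ a.pts

/-- `r_sup`: the maximum cardinality of an overlap set. -/
noncomputable def rsup (F : ArcFamily) : ℕ :=
  sSup {n | ∃ p, (F.overlap p).card = n}

/-- `r_inf`: the minimum cardinality of an overlap set. -/
noncomputable def rinf (F : ArcFamily) : ℕ :=
  sInf {n | ∃ p, (F.overlap p).card = n}

/-- The circular arc graph of a family: vertices are the arcs, two distinct arcs are
adjacent iff they intersect. -/
def graph (F : ArcFamily) : SimpleGraph {a : CArc // a ∈ F.arcs} where
  Adj u v := u ≠ v ∧ (u.1.pts ∩ v.1.pts).Nonempty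
  symm := by constructor; rintro u v ⟨h, q, h1, h2⟩; exact ⟨h.symm, q, h2, h1⟩
  loopless := by constructor; rintro u ⟨h, -⟩; exact h rfl

/-- `F.CwAdj u v` : the arc `v` is clockwise adjacent to the arc `u`,
i.e. `v ≠ u` and `v ∈ O(r(u))`. -/
def CwAdj (F : ArcFamily) (u v : CArc) : Prop :=
  v ≠ u ∧ v ∈ F.overlap u.right

/-- `F.AcwAdj u v` : the arc `v` is anticlockwise adjacent to the arc `u`,
i.e. `v ≠ u` and `v ∈ O(l(u))`. -/
def AcwAdj (F : ArcFamily) (u v : CArc) : Prop :=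
  v ≠ u ∧ v ∈ F.overlap u.left

end ArcFamily

/-- `G` has a complete minor on `m` vertices: there are `m` pairwise disjoint connected
branch sets with an edge of `G` between any two of them. -/
def HasKMinor {V : Type*} (G : SimpleGraph V) (m : ℕ) : Prop :=
  ∃ B : Fin m → Set V,
    (∀ i, (G.induce (B i)).Connected) ∧
    (Pairwise fun i j => Disjoint (B i) (B j)) ∧
    (Pairwise fun i j => ∃ u ∈ B i, ∃ v ∈ B j, G.Adj u v)

/-- A graph is a proper circular arc graph if it is isomorphic to the circular arc graph
of some proper family of arcs. -/
def IsProperCircularArcGraph {V : Type*} (G : SimpleGraph V) : Prop :=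
  ∃ F : ArcFamily, F.IsProper ∧ Nonempty (G ≃g F.graph)

/-- The clockwise angular distance from `p` to `q`: the unique `t ∈ [0,1)`
with `q = p + t`.  Points are "encountered" in clockwise order of this quantity
when traversing clockwise from `p`. -/
noncomputable def angFrom (p q : AddCircle (1:ℝ)) : ℝ :=
  ((AddCircle.equivIco (1:ℝ) 0) (q - p) : ℝ)

/-- A minimum counterexample to Hadwiger's conjecture among proper circular arc graphs:
a proper family of arcs whose circular arc graph `𝒢` has no complete minor on `χ(𝒢)`
vertices, while every proper circular arc graph on fewer vertices than `𝒢` has a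
complete minor on its own chromatic number of vertices. -/
structure MinCounterexample where
  F : ArcFamily
  proper : F.IsProper
  no_clique_minor : ∀ m : ℕ, F.graph.chromaticNumber = m → ¬ HasKMinor F.graph m
  minimal : ∀ (V : Type) [inst : Fintype V] (G : SimpleGraph V),
    IsProperCircularArcGraph G → Fintype.card V < F.arcs.card →
    ∀ m : ℕ, G.chromaticNumber = m → HasKMinor G m

/-- A minimum counterexample `𝒢` to Hadwiger's conjecture among proper circular arc
graphs, together with a fixed maximum overlap set `O = O(p₀)` of cardinality `r`,
the quantities `x = χ(𝒢) − r` and `k = n − r`, and the labeling `q 1, …, q r`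
(the arcs of `O`) and `a 1, …, a k` (the remaining arcs) of the arcs of the
representation in the clockwise order, starting from `p₀`, in which their right
endpoints are encountered. -/
structure LabeledMinCounterexample extends MinCounterexample where
  p₀ : AddCircle (1:ℝ)
  r : ℕ
  x : ℕ
  k : ℕ
  q : ℕ → CArc
  a : ℕ → CArc
  hr : (F.overlap p₀).card = r
  hmax : r = F.rsup
  hx : F.graph.chromaticNumber = ((r + x : ℕ) : ℕ∞)
  hk : F.arcs.card = r + k
  q_mem : ∀ i, 1 ≤ i → i ≤ r → q i ∈ F.overlap p₀
  a_mem : ∀ j, 1 ≤ j → j ≤ k → a j ∈ F.arcs ∧ a j ∉ F.overlap p₀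
  q_inj : ∀ i i', 1 ≤ i → i ≤ r → 1 ≤ i' → i' ≤ r → q i = q i' → i = i'
  a_inj : ∀ j j', 1 ≤ j → j ≤ k → 1 ≤ j' → j' ≤ k → a j = a j' → j = j'
  q_order : ∀ i i', 1 ≤ i → i < i' → i' ≤ r →
    angFrom p₀ (q i).right < angFrom p₀ (q i').right
  a_order : ∀ j j', 1 ≤ j → j < j' → j' ≤ k →
    angFrom p₀ (a j).right < angFrom p₀ (a j').right
  qa_order : ∀ i j, 1 ≤ i → i ≤ r → 1 ≤ j → j ≤ k →
    angFrom p₀ (q i).right < angFrom p₀ (a j).right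


section Angle

variable {p : AddCircle (1:ℝ)}

lemma angFrom_mem_Ico (p z : AddCircle (1:ℝ)) : angFrom p z ∈ Set.Ico (0:ℝ) 1 := by
  simpa [angFrom] using ((AddCircle.equivIco (1:ℝ) 0) (z - p)).2

lemma add_angFrom (p z : AddCircle (1:ℝ)) : p + (angFrom p z : AddCircle (1:ℝ)) = z := by
  rw [angFrom, AddCircle.coe_equivIco, add_sub_cancel]

lemma angFrom_add_coe {t : ℝ} (ht : t ∈ Set.Ico (0:ℝ) 1) : angFrom p (p + t) = t := by
  rw [angFrom, add_sub_cancel_left, AddCircle.equivIco_coe_of_mem (by simpa using ht)]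

lemma angFrom_add_coe_of_one_le {t : ℝ} (h₁ : 1 ≤ t) (h₂ : t < 2) :
    angFrom p (p + t) = t - 1 := by
  rw [← sub_add_cancel t 1, AddCircle.coe_add_period, add_sub_cancel_right,
    angFrom_add_coe ⟨by linarith, by linarith⟩]

lemma angFrom_add_coe_cases {t : ℝ} (h₀ : 0 ≤ t) (h₂ : t < 2) :
    angFrom p (p + t) = t ∧ t < 1 ∨ angFrom p (p + t) = t - 1 ∧ 1 ≤ t := by
  rcases lt_or_ge t 1 with h | h
  · exact Or.inl ⟨angFrom_add_coe ⟨h₀, h⟩, h⟩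
  · exact Or.inr ⟨angFrom_add_coe_of_one_le h h₂, h⟩

lemma angFrom_self (p : AddCircle (1:ℝ)) : angFrom p p = 0 := by
  simpa using angFrom_add_coe (p := p) (t := 0) ⟨le_rfl, one_pos⟩

lemma angFrom_injective (p : AddCircle (1:ℝ)) : Function.Injective (angFrom p) :=
  fun z z' h => by rw [← add_angFrom p z, h, add_angFrom]

end Angle

namespace CArc

variable (p : AddCircle (1:ℝ)) {w : CArc} {z : AddCircle (1:ℝ)}

lemma left_mem_pts (w : CArc) : w.left ∈ w.pts := ⟨0, le_rfl, w.len_pos.le, by simp⟩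

lemma right_mem_pts (w : CArc) : w.right ∈ w.pts := ⟨w.len, w.len_pos.le, le_rfl, rfl⟩

lemma mem_pts_iff_exists : z ∈ w.pts ↔
    ∃ t, 0 ≤ t ∧ t ≤ w.len ∧ z = p + ((angFrom p w.left + t : ℝ) : AddCircle (1:ℝ)) := by
  simp only [pts, Set.mem_ofPred_eq, AddCircle.coe_add, ← add_assoc, add_angFrom]

lemma angFrom_right_cases :
    angFrom p w.right = angFrom p w.left + w.len ∧ angFrom p w.left + w.len < 1 ∨
      angFrom p w.right = angFrom p w.left + w.len - 1 ∧ 1 ≤ angFrom p w.left + w.len := by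
  obtain ⟨hL₀, hL₁⟩ := angFrom_mem_Ico p w.left
  have hright : w.right = p + ((angFrom p w.left + w.len : ℝ) : AddCircle (1:ℝ)) := by
    rw [AddCircle.coe_add, ← add_assoc, add_angFrom]; rfl
  rw [hright]
  exact angFrom_add_coe_cases (by linarith [w.len_pos]) (by linarith [w.len_lt_one])

lemma mem_pts_iff_of_le (h : angFrom p w.left ≤ angFrom p w.right) :
    z ∈ w.pts ↔ angFrom p w.left ≤ angFrom p z ∧ angFrom p z ≤ angFrom p w.right := by
  have hℓ := w.len_lt_one
  obtain ⟨hR, hR₁⟩ : angFrom p w.right = angFrom p w.left + w.len ∧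
      angFrom p w.left + w.len < 1 := by
    rcases angFrom_right_cases p (w := w) with hR | ⟨hR, -⟩
    · exact hR
    · linarith
  rw [mem_pts_iff_exists p]
  constructor
  · rintro ⟨t, ht₀, htℓ, rfl⟩
    rw [angFrom_add_coe ⟨by linarith [(angFrom_mem_Ico p w.left).1], by linarith⟩]
    constructor <;> linarith
  · rintro ⟨h₁, h₂⟩
    exact ⟨angFrom p z - angFrom p w.left, by linarith, by linarith,
      by rw [add_sub_cancel, add_angFrom]⟩

lemma mem_pts_iff_of_lt (h : angFrom p w.right < angFrom p w.left) :
    z ∈ w.pts ↔ angFrom p z ≤ angFrom p w.right ∨ angFrom p w.left ≤ angFrom p z := by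
  obtain ⟨hL₀, hL₁⟩ := angFrom_mem_Ico p w.left
  have hR₀ := (angFrom_mem_Ico p w.right).1
  have hℓ := w.len_lt_one
  obtain ⟨hR, -⟩ : angFrom p w.right = angFrom p w.left + w.len - 1 ∧
      1 ≤ angFrom p w.left + w.len := by
    rcases angFrom_right_cases p (w := w) with ⟨hR, -⟩ | hR
    · linarith [w.len_pos]
    · exact hR
  rw [mem_pts_iff_exists p]
  constructor
  · rintro ⟨t, ht₀, htℓ, rfl⟩
    rcases angFrom_add_coe_cases (p := p) (t := angFrom p w.left + t) (by linarith) (by linarith)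
      with ⟨hZ, -⟩ | ⟨hZ, -⟩
    · exact Or.inr (by linarith)
    · exact Or.inl (by linarith)
  · obtain ⟨hZ₀, hZ₁⟩ := angFrom_mem_Ico p z
    rintro (h₁ | h₁)
    · refine ⟨angFrom p z + 1 - angFrom p w.left, by linarith, by linarith, ?_⟩
      rw [add_sub_cancel, AddCircle.coe_add_period, add_angFrom]
    · exact ⟨angFrom p z - angFrom p w.left, by linarith, by linarith,
        by rw [add_sub_cancel, add_angFrom]⟩

lemma angFrom_left_le_right_of_not_mem (h : p ∉ w.pts) :
    angFrom p w.left ≤ angFrom p w.right := by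
  by_contra! hlt
  refine h ((mem_pts_iff_of_lt p hlt).2 (Or.inl ?_))
  rw [angFrom_self]
  exact (angFrom_mem_Ico p _).1

lemma angFrom_right_lt_left_of_mem (h : p ∈ w.pts) (hl : w.left ≠ p) :
    angFrom p w.right < angFrom p w.left := by
  by_contra! hle
  have hL := ((mem_pts_iff_of_le p hle).1 h).1
  rw [angFrom_self] at hL
  exact hl (angFrom_injective p (by rw [angFrom_self]; linarith [(angFrom_mem_Ico p w.left).1]))

lemma mem_pts_of_angFrom_le_right (hp : p ∈ w.pts) (hz : angFrom p z ≤ angFrom p w.right) :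
    z ∈ w.pts := by
  rcases le_or_gt (angFrom p w.left) (angFrom p w.right) with h | h
  · have hL := ((mem_pts_iff_of_le p h).1 hp).1
    rw [angFrom_self] at hL
    exact (mem_pts_iff_of_le p h).2 ⟨hL.trans (angFrom_mem_Ico p z).1, hz⟩
  · exact (mem_pts_iff_of_lt p h).2 (Or.inl hz)

end CArc

namespace ArcFamily.IsProper

open CArc

variable {F : ArcFamily} {u v : CArc} {p x : AddCircle (1:ℝ)}

lemma pts_eq_of_subset (hF : F.IsProper) (hu : u ∈ F.arcs) (hv : v ∈ F.arcs)
    (h : u.pts ⊆ v.pts) : u.pts = v.pts := by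
  by_contra hne
  exact hF u hu v hv (h.ssubset_of_ne hne)

lemma angFrom_eq_of_nested (hF : F.IsProper) (hu : u ∈ F.arcs) (hv : v ∈ F.arcs)
    (hpu : p ∉ u.pts) (hpv : p ∉ v.pts)
    (hL : angFrom p v.left ≤ angFrom p u.left) (hR : angFrom p u.right ≤ angFrom p v.right) :
    angFrom p u.left = angFrom p v.left ∧ angFrom p u.right = angFrom p v.right := by
  have memu := fun z => mem_pts_iff_of_le p (z := z) (angFrom_left_le_right_of_not_mem p hpu)
  have memv := fun z => mem_pts_iff_of_le p (z := z) (angFrom_left_le_right_of_not_mem p hpv)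
  have heq : u.pts = v.pts := hF.pts_eq_of_subset hu hv fun z hz => by
    obtain ⟨h₁, h₂⟩ := (memu z).1 hz
    exact (memv z).2 ⟨hL.trans h₁, h₂.trans hR⟩
  have hl := (memu _).1 (heq ▸ v.left_mem_pts)
  have hr := (memu _).1 (heq ▸ v.right_mem_pts)
  constructor <;> linarith [hl.1, hr.2]

lemma angFrom_left_lt_of_right_lt (hF : F.IsProper) (hu : u ∈ F.arcs) (hv : v ∈ F.arcs)
    (hpu : p ∉ u.pts) (hpv : p ∉ v.pts) (h : angFrom p u.right < angFrom p v.right) :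
    angFrom p u.left < angFrom p v.left := by
  by_contra! hL
  exact h.ne (hF.angFrom_eq_of_nested hu hv hpu hpv hL h.le).2

lemma angFrom_right_lt_of_left_lt (hF : F.IsProper) (hu : u ∈ F.arcs) (hv : v ∈ F.arcs)
    (hpu : p ∉ u.pts) (hpv : p ∉ v.pts) (h : angFrom p u.left < angFrom p v.left) :
    angFrom p u.right < angFrom p v.right := by
  by_contra! hR
  exact h.ne' (hF.angFrom_eq_of_nested hv hu hpv hpu h.le hR).1

lemma mem_of_mem_of_angFrom_le_right (hF : F.IsProper) (hu : u ∈ F.arcs) (hv : v ∈ F.arcs)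
    (hpu : p ∉ u.pts) (hpv : p ∉ v.pts) (hR : angFrom p u.right < angFrom p v.right)
    (hx : x ∈ v.pts) (hxu : angFrom p x ≤ angFrom p u.right) : x ∈ u.pts := by
  have hL := hF.angFrom_left_lt_of_right_lt hu hv hpu hpv hR
  have hxv := ((mem_pts_iff_of_le p (angFrom_left_le_right_of_not_mem p hpv)).1 hx).1
  exact (mem_pts_iff_of_le p (angFrom_left_le_right_of_not_mem p hpu)).2
    ⟨by linarith, hxu⟩

lemma left_mem_of_angFrom_right_le (hF : F.IsProper) (hu : u ∈ F.arcs) (hv : v ∈ F.arcs)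
    (hv' : angFrom p v.right < angFrom p v.left) (h : angFrom p u.right ≤ angFrom p v.right) :
    v.left ∈ u.pts := by
  by_contra hl
  have memv := fun z => mem_pts_iff_of_lt p (z := z) hv'
  have hsub : u.pts ⊆ v.pts := fun z hz => by
    rcases le_or_gt (angFrom p u.left) (angFrom p u.right) with hu' | hu'
    · exact (memv z).2 (Or.inl (((mem_pts_iff_of_le p hu').1 hz).2.trans h))
    · rw [mem_pts_iff_of_lt p hu'] at hz hl
      simp only [not_or, not_le] at hl
      rcases hz with hz | hz
      · exact (memv z).2 (Or.inl (hz.trans h))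
      · exact (memv z).2 (Or.inr (hl.2.le.trans hz))
  exact hl (hF.pts_eq_of_subset hu hv hsub ▸ v.left_mem_pts)

lemma left_mem_of_not_mem_of_angFrom_left_le (hF : F.IsProper) (hu : u ∈ F.arcs)
    (hv : v ∈ F.arcs) (hpu : p ∉ u.pts) (hv' : angFrom p v.right < angFrom p v.left)
    (h : angFrom p v.left ≤ angFrom p u.right) : v.left ∈ u.pts := by
  have memu := fun z => mem_pts_iff_of_le p (z := z) (angFrom_left_le_right_of_not_mem p hpu)
  refine (memu _).2 ⟨?_, h⟩
  by_contra! hL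
  have hsub : u.pts ⊆ v.pts := fun z hz =>
    (mem_pts_iff_of_lt p hv').2 (Or.inr (hL.le.trans ((memu z).1 hz).1))
  refine hpu (hF.pts_eq_of_subset hu hv hsub ▸ (mem_pts_iff_of_lt p hv').2 (Or.inl ?_))
  rw [angFrom_self]
  exact (angFrom_mem_Ico p _).1

end ArcFamily.IsProper

namespace ArcFamily

variable {F : ArcFamily} {u v : CArc}

lemma cwAdj_iff : F.CwAdj u v ↔ v ≠ u ∧ v ∈ F.arcs ∧ u.right ∈ v.pts := by
  simp only [CwAdj, overlap, Finset.mem_filter]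

lemma acwAdj_iff : F.AcwAdj u v ↔ v ≠ u ∧ v ∈ F.arcs ∧ u.left ∈ v.pts := by
  simp only [AcwAdj, overlap, Finset.mem_filter]

lemma angFrom_left_ne (p : AddCircle (1:ℝ)) (hu : u ∈ F.arcs) (hv : v ∈ F.arcs) (h : u ≠ v) :
    angFrom p u.left ≠ angFrom p v.left :=
  fun e => (F.endpoints_distinct u hu v hv h).1 (angFrom_injective p e)

lemma angFrom_right_ne (p : AddCircle (1:ℝ)) (hu : u ∈ F.arcs) (hv : v ∈ F.arcs) (h : u ≠ v) :
    angFrom p u.right ≠ angFrom p v.right :=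
  fun e => (F.endpoints_distinct u hu v hv h).2.2.2 (angFrom_injective p e)

end ArcFamily

namespace LabeledMinCounterexample

open CArc ArcFamily

variable (C : LabeledMinCounterexample) {i j : ℕ}

lemma q_mem_arcs (h₁ : 1 ≤ i) (h₂ : i ≤ C.r) : C.q i ∈ C.F.arcs :=
  (Finset.mem_filter.1 (C.q_mem i h₁ h₂)).1

lemma mem_pts_q (h₁ : 1 ≤ i) (h₂ : i ≤ C.r) : C.p₀ ∈ (C.q i).pts :=
  (Finset.mem_filter.1 (C.q_mem i h₁ h₂)).2

lemma a_mem_arcs (h₁ : 1 ≤ j) (h₂ : j ≤ C.k) : C.a j ∈ C.F.arcs :=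
  (C.a_mem j h₁ h₂).1

lemma not_mem_pts_a (h₁ : 1 ≤ j) (h₂ : j ≤ C.k) : C.p₀ ∉ (C.a j).pts :=
  fun h => (C.a_mem j h₁ h₂).2 (Finset.mem_filter.2 ⟨C.a_mem_arcs h₁ h₂, h⟩)

lemma a_ne_q (hi₁ : 1 ≤ i) (hi₂ : i ≤ C.r) (hj₁ : 1 ≤ j) (hj₂ : j ≤ C.k) : C.a j ≠ C.q i :=
  fun h => C.not_mem_pts_a hj₁ hj₂ (h ▸ C.mem_pts_q hi₁ hi₂)

lemma lt_of_angFrom_right_a_lt (hi₂ : i ≤ C.k) (hj₁ : 1 ≤ j)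
    (h : angFrom C.p₀ (C.a i).right < angFrom C.p₀ (C.a j).right) : i < j := by
  by_contra! hji
  rcases hji.eq_or_lt with rfl | hlt
  · exact h.false
  · exact (C.a_order j i hj₁ hlt hi₂).asymm h

lemma cwAdj_q_range (hi₁ : 1 ≤ i) (hi₂ : i ≤ C.r) (hj₁ : 1 ≤ j) (hj₂ : j ≤ C.k)
    (h : C.F.CwAdj (C.q i) (C.a j)) :
    (∀ i', i < i' → i' ≤ C.r → C.F.CwAdj (C.q i) (C.q i')) ∧
      (∀ j', 1 ≤ j' → j' ≤ j → C.F.CwAdj (C.q i) (C.a j')) := by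
  constructor
  · intro i' hii' hi'
    have hi'₁ : 1 ≤ i' := by omega
    refine cwAdj_iff.2 ⟨fun he => ?_, C.q_mem_arcs hi'₁ hi', ?_⟩
    · have := C.q_inj _ _ hi'₁ hi' hi₁ hi₂ he
      omega
    · exact mem_pts_of_angFrom_le_right _ (C.mem_pts_q hi'₁ hi')
        (C.q_order i i' hi₁ hii' hi').le
  · intro j' hj'₁ hj'
    rcases hj'.eq_or_lt with rfl | hlt
    · exact h
    have hj'₂ : j' ≤ C.k := by omega
    refine cwAdj_iff.2 ⟨C.a_ne_q hi₁ hi₂ hj'₁ hj'₂, C.a_mem_arcs hj'₁ hj'₂, ?_⟩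
    exact C.proper.mem_of_mem_of_angFrom_le_right (C.a_mem_arcs hj'₁ hj'₂)
      (C.a_mem_arcs hj₁ hj₂) (C.not_mem_pts_a hj'₁ hj'₂) (C.not_mem_pts_a hj₁ hj₂)
      (C.a_order j' j hj'₁ hlt hj₂) (cwAdj_iff.1 h).2.2 (C.qa_order i j' hi₁ hi₂ hj'₁ hj'₂).le


lemma cwAdj_a_range (hi₁ : 1 ≤ i) (hi₂ : i ≤ C.k) (hj₁ : 1 ≤ j) (hj₂ : j ≤ C.k)
    (h : C.F.CwAdj (C.a i) (C.a j)) :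
    i < j ∧ ∀ j', i < j' → j' ≤ j → C.F.CwAdj (C.a i) (C.a j') := by
  obtain ⟨hne, -, hmem⟩ := cwAdj_iff.1 h
  have hR : angFrom C.p₀ (C.a i).right < angFrom C.p₀ (C.a j).right :=
    lt_of_le_of_ne
      ((mem_pts_iff_of_le _ (angFrom_left_le_right_of_not_mem _ (C.not_mem_pts_a hj₁ hj₂))).1
        hmem).2
      (angFrom_right_ne _ (C.a_mem_arcs hi₁ hi₂) (C.a_mem_arcs hj₁ hj₂) hne.symm)
  refine ⟨C.lt_of_angFrom_right_a_lt hi₂ hj₁ hR, fun j' hij' hj' => ?_⟩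
  rcases hj'.eq_or_lt with rfl | hlt
  · exact h
  have hj'₁ : 1 ≤ j' := by omega
  have hj'₂ : j' ≤ C.k := by omega
  refine cwAdj_iff.2 ⟨fun he => ?_, C.a_mem_arcs hj'₁ hj'₂, ?_⟩
  · have := C.a_inj _ _ hj'₁ hj'₂ hi₁ hi₂ he
    omega
  · exact C.proper.mem_of_mem_of_angFrom_le_right (C.a_mem_arcs hj'₁ hj'₂)
      (C.a_mem_arcs hj₁ hj₂) (C.not_mem_pts_a hj'₁ hj'₂) (C.not_mem_pts_a hj₁ hj₂)
      (C.a_order j' j hj'₁ hlt hj₂) hmem (C.a_order i j' hi₁ hij' hj'₂).le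

lemma acwAdj_a_range (hi₁ : 1 ≤ i) (hi₂ : i ≤ C.k) (hj₁ : 1 ≤ j) (hj₂ : j ≤ C.k)
    (h : C.F.AcwAdj (C.a i) (C.a j)) :
    j < i ∧ ∀ j', j ≤ j' → j' < i → C.F.AcwAdj (C.a i) (C.a j') := by
  obtain ⟨hne, -, hmem⟩ := acwAdj_iff.1 h
  rw [mem_pts_iff_of_le _ (angFrom_left_le_right_of_not_mem _ (C.not_mem_pts_a hj₁ hj₂))]
    at hmem
  have hL : angFrom C.p₀ (C.a j).left < angFrom C.p₀ (C.a i).left :=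
    lt_of_le_of_ne hmem.1 (angFrom_left_ne _ (C.a_mem_arcs hj₁ hj₂) (C.a_mem_arcs hi₁ hi₂) hne)
  refine ⟨C.lt_of_angFrom_right_a_lt hj₂ hi₁
    (C.proper.angFrom_right_lt_of_left_lt (C.a_mem_arcs hj₁ hj₂) (C.a_mem_arcs hi₁ hi₂)
      (C.not_mem_pts_a hj₁ hj₂) (C.not_mem_pts_a hi₁ hi₂) hL), fun j' hj' hj'i => ?_⟩
  rcases hj'.eq_or_lt with rfl | hlt
  · exact h
  have hj'₁ : 1 ≤ j' := by omega
  have hj'₂ : j' ≤ C.k := by omega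
  refine acwAdj_iff.2 ⟨fun he => ?_, C.a_mem_arcs hj'₁ hj'₂, ?_⟩
  · have := C.a_inj _ _ hj'₁ hj'₂ hi₁ hi₂ he
    omega
  · exact C.proper.mem_of_mem_of_angFrom_le_right (C.a_mem_arcs hj'₁ hj'₂)
      (C.a_mem_arcs hi₁ hi₂) (C.not_mem_pts_a hj'₁ hj'₂) (C.not_mem_pts_a hi₁ hi₂)
      (C.a_order j' i hj'₁ hj'i hi₂) (C.a i).left_mem_pts
      (hmem.2.trans (C.a_order j j' hj₁ hlt hj'₂).le)

lemma acwAdj_q_range (hi₁ : 1 ≤ i) (hi₂ : i ≤ C.r) (hj₁ : 1 ≤ j) (hj₂ : j ≤ C.k)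
    (h : C.F.AcwAdj (C.q i) (C.a j)) :
    (∀ j', j ≤ j' → j' ≤ C.k → C.F.AcwAdj (C.q i) (C.a j')) ∧
      (∀ i', 1 ≤ i' → i' < i → C.F.AcwAdj (C.q i) (C.q i')) := by
  obtain ⟨-, -, hmem⟩ := acwAdj_iff.1 h
  have hwrap : angFrom C.p₀ (C.q i).right < angFrom C.p₀ (C.q i).left :=
    angFrom_right_lt_left_of_mem _ (C.mem_pts_q hi₁ hi₂)
      fun he => C.not_mem_pts_a hj₁ hj₂ (he ▸ hmem)
  have hmem' := ((mem_pts_iff_of_le _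
    (angFrom_left_le_right_of_not_mem _ (C.not_mem_pts_a hj₁ hj₂))).1 hmem).2
  constructor
  · intro j' hj' hj'₂
    have hj'₁ : 1 ≤ j' := by omega
    have hR : angFrom C.p₀ (C.a j).right ≤ angFrom C.p₀ (C.a j').right := by
      rcases hj'.eq_or_lt with rfl | hlt
      · exact le_rfl
      · exact (C.a_order j j' hj₁ hlt hj'₂).le
    refine acwAdj_iff.2 ⟨C.a_ne_q hi₁ hi₂ hj'₁ hj'₂, C.a_mem_arcs hj'₁ hj'₂, ?_⟩
    exact C.proper.left_mem_of_not_mem_of_angFrom_left_le (C.a_mem_arcs hj'₁ hj'₂)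
      (C.q_mem_arcs hi₁ hi₂) (C.not_mem_pts_a hj'₁ hj'₂) hwrap (hmem'.trans hR)
  · intro i' hi'₁ hi'i
    have hi'₂ : i' ≤ C.r := by omega
    refine acwAdj_iff.2 ⟨fun he => ?_, C.q_mem_arcs hi'₁ hi'₂, ?_⟩
    · have := C.q_inj _ _ hi'₁ hi'₂ hi₁ hi₂ he
      omega
    · exact C.proper.left_mem_of_angFrom_right_le (C.q_mem_arcs hi'₁ hi'₂)
        (C.q_mem_arcs hi₁ hi₂) hwrap (C.q_order i' i hi'₁ hi'i hi₂).le

end LabeledMinCounterexample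

/-- Adjacency consequences of the labeling of the minimum counterexample:
(1) if `a j` is clockwise adjacent to `q i` then all of `q (i+1), …, q r, a 1, …, a j`
are clockwise adjacent to `q i`; (2) if `a j` is clockwise adjacent to `a i` then `i < j`
and all of `a (i+1), …, a j` are clockwise adjacent to `a i`; (3) if `a j` is
anticlockwise adjacent to `a i` then `j < i` and all of `a j, …, a (i−1)` are
anticlockwise adjacent to `a i`; (4) if `a j` is anticlockwise adjacent to `q i` then all
of `a j, …, a k, q 1, …, q (i−1)` are anticlockwise adjacent to `q i`. -/
theorem labeling_adjacency_ranges (C : LabeledMinCounterexample) :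
    (∀ i j, 1 ≤ i → i ≤ C.r → 1 ≤ j → j ≤ C.k → C.F.CwAdj (C.q i) (C.a j) →
      (∀ i', i < i' → i' ≤ C.r → C.F.CwAdj (C.q i) (C.q i')) ∧
      (∀ j', 1 ≤ j' → j' ≤ j → C.F.CwAdj (C.q i) (C.a j'))) ∧
    (∀ i j, 1 ≤ i → i ≤ C.k → 1 ≤ j → j ≤ C.k → C.F.CwAdj (C.a i) (C.a j) →
      i < j ∧ ∀ j', i < j' → j' ≤ j → C.F.CwAdj (C.a i) (C.a j')) ∧
    (∀ i j, 1 ≤ i → i ≤ C.k → 1 ≤ j → j ≤ C.k → C.F.AcwAdj (C.a i) (C.a j) →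
      j < i ∧ ∀ j', j ≤ j' → j' < i → C.F.AcwAdj (C.a i) (C.a j')) ∧
    (∀ i j, 1 ≤ i → i ≤ C.r → 1 ≤ j → j ≤ C.k → C.F.AcwAdj (C.q i) (C.a j) →
      (∀ j', j ≤ j' → j' ≤ C.k → C.F.AcwAdj (C.q i) (C.a j')) ∧
      (∀ i', 1 ≤ i' → i' < i → C.F.AcwAdj (C.q i) (C.q i'))) :=
  ⟨fun _ _ => C.cwAdj_q_range, fun _ _ => C.cwAdj_a_range, fun _ _ => C.acwAdj_a_range,
    fun _ _ => C.acwAdj_q_range⟩
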